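/- arXiv:2505.05910 — 2 statements merged into one kernel-verified Lean document; each statement's English description precedes it below -/
import Mathlib

section
/- The Schur functions s_λ, as λ ranges over partitions of n, form a ℤ-basis for the degree-n homogeneous component Λ^n of the ring of symmetric functions. -/
/-!
We model symmetric functions concretely: a symmetric function of homogeneous degree `n`
(an element of `Λ^n`) is a formal power series in the variables `x_0, x_1, x_2, …`
(an element of `MvPowerSeries ℕ ℤ`) that is invariant under all permutations of the
variables and supported on monomials of total degree `n`.  The Schur function `s_λ` is
defined combinatorially: its coefficient on a monomial `x^α` is the number of
semistandard Young tableaux of shape `λ` whose weight is `α`.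
-/

open MvPowerSeries Finsupp

attribute [local instance] Classical.propDecidable

/-- The total degree of a monomial. -/
def degOf (d : ℕ →₀ ℕ) : ℕ := d.sum fun _ k => k

/-- The Young diagram of a partition (rows given by the parts, in decreasing order). -/
noncomputable def toYD {n : ℕ} (l : n.Partition) : YoungDiagram :=
  YoungDiagram.ofRowLens (l.parts.sort (· ≥ ·)) (Multiset.pairwise_sort _ _).sortedGE

/-- The Schur function `s_μ = Σ_T x^{α_T}`, where the sum is over all semistandard Young
tableaux `T` of shape `μ` and `α_T` records the number of occurrences of each entry
of `T`.  Equivalently, the coefficient of `x^α` in `s_μ` is the number of semistandard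
Young tableaux of shape `μ` and weight `α`. -/
noncomputable def schurFn (μ : YoungDiagram) : MvPowerSeries ℕ ℤ :=
  fun α => (Nat.card {T : SemistandardYoungTableau μ //
    ∀ i : ℕ, (μ.cells.filter fun c => T c.1 c.2 = i).card = α i} : ℤ)

/-- The homogeneous degree `n` part `Λ^n` of the ring of symmetric functions over `ℤ`:
permutation-invariant power series supported in total degree `n`. -/
noncomputable def LambdaDeg (n : ℕ) : Submodule ℤ (MvPowerSeries ℕ ℤ) where
  carrier := {φ | (∀ (e : Equiv.Perm ℕ) (d : ℕ →₀ ℕ),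
      MvPowerSeries.coeff (Finsupp.mapDomain e d) φ = MvPowerSeries.coeff d φ) ∧
    ∀ d : ℕ →₀ ℕ, MvPowerSeries.coeff d φ ≠ 0 → degOf d = n}
  add_mem' := by
    rintro a b ⟨ha1, ha2⟩ ⟨hb1, hb2⟩
    refine ⟨fun e d => ?_, fun d hd => ?_⟩
    · simp only [map_add, ha1, hb1]
    · by_contra h
      rw [map_add] at hd
      rw [fun h' : MvPowerSeries.coeff d a = 0 => h'] at hd
      · rw [fun h' : MvPowerSeries.coeff d b = 0 => h'] at hd
        · simp at hd
        · by_contra hb; exact h (hb2 d hb)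
      · by_contra hA; exact h (ha2 d hA)
  zero_mem' := by
    refine ⟨fun e d => by simp, fun d hd => ?_⟩
    simp at hd
  smul_mem' := by
    rintro c x ⟨hx1, hx2⟩
    refine ⟨fun e d => ?_, fun d hd => ?_⟩
    · rw [LinearMap.map_smul_of_tower, LinearMap.map_smul_of_tower, hx1]
    · apply hx2
      intro h
      rw [map_smul, h, smul_zero] at hd
      exact hd rfl

/-!
The Bender–Knuth involution on semistandard tableaux of shape `λ` exchanges the numbers of
entries `i` and `i + 1`, so the coefficients of `s_λ` are invariant under adjacent
transpositions of the variables; bubble sort upgrades this to invariance under every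
permutation, and `s_λ ∈ Λ^n`.

Order the partitions of `n` lexicographically.  The Kostka matrix `K λ μ = [x^μ] s_λ` is then
unitriangular: the highest weight tableau is the only tableau of shape `λ` and weight `λ`, and
a tableau of shape `λ` and weight `μ` forces `μ ⊴ λ`, since its entries `< k` lie in the first
`k` rows.  An element of `Λ^n` is determined by its coefficients at the `x^μ`, `μ ⊢ n`, by
symmetry, so inverting `K` over `ℤ` shows that the `s_λ` are independent and span `Λ^n`.
-/

open Finset

theorem Finset.eq_Ico_min'_of_ordConnected {s : Finset ℕ} (hs : s.Nonempty)
    (h : (s : Set ℕ).OrdConnected) : s = Ico (s.min' hs) (s.min' hs + #s) := by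
  have hIcc : s = Icc (s.min' hs) (s.max' hs) := by
    refine subset_antisymm (fun x hx => mem_Icc.mpr ⟨s.min'_le x hx, s.le_max' x hx⟩) ?_
    intro x hx
    have := h.out (s.min'_mem hs) (s.max'_mem hs) (by simpa using hx)
    exact_mod_cast this
  have hcard : #s = s.max' hs + 1 - s.min' hs := by
    conv_lhs => rw [hIcc]
    exact Nat.card_Icc _ _
  have hle := s.min'_le _ (s.max'_mem hs)
  conv_lhs => rw [hIcc]
  ext x
  simp only [mem_Icc, mem_Ico]
  omega

theorem YoungDiagram.card_filter_cells (μ : YoungDiagram) (P : ℕ → ℕ → Prop)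
    [DecidablePred fun p : ℕ × ℕ => P p.1 p.2] [∀ r, DecidablePred (P r)] :
    #{p ∈ μ.cells | P p.1 p.2} =
      ∑ r ∈ range (μ.colLen 0), #{c ∈ range (μ.rowLen r) | P r c} := by
  have hrow : ∀ p ∈ {p ∈ μ.cells | P p.1 p.2}, p.1 ∈ range (μ.colLen 0) := by
    rintro ⟨r, c⟩ hp
    rw [mem_filter, YoungDiagram.mem_cells] at hp
    exact mem_range.mpr
      (YoungDiagram.mem_iff_lt_colLen.mp (μ.up_left_mem le_rfl c.zero_le hp.1))
  rw [card_eq_sum_card_fiberwise hrow]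
  refine sum_congr rfl fun r _ => ?_
  have hfib : {p ∈ {p ∈ μ.cells | P p.1 p.2} | p.1 = r} =
      image (r, ·) {c ∈ range (μ.rowLen r) | P r c} := by
    ext ⟨r', c⟩
    simp only [mem_filter, mem_image, mem_range, YoungDiagram.mem_cells, Prod.mk.injEq]
    constructor
    · rintro ⟨⟨hm, hP⟩, rfl⟩
      exact ⟨c, ⟨YoungDiagram.mem_iff_lt_rowLen.mp hm, hP⟩, rfl, rfl⟩
    · rintro ⟨c, ⟨hc, hP⟩, rfl, rfl⟩
      exact ⟨⟨YoungDiagram.mem_iff_lt_rowLen.mpr hc, hP⟩, rfl⟩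
  rw [hfib, card_image_of_injective _ (Prod.mk_right_injective r)]

theorem Finset.card_filter_lt_eq_sum {β : Type*} (s : Finset β) (f : β → ℕ) (k : ℕ) :
    #{x ∈ s | f x < k} = ∑ j ∈ range k, #{x ∈ s | f x = j} := by
  rw [card_eq_sum_card_fiberwise fun x hx => mem_range.mpr (mem_filter.mp hx).2]
  refine sum_congr rfl fun j hj => ?_
  rw [filter_filter]
  exact congrArg card
    (filter_congr fun x _ => ⟨And.right, fun h => ⟨h ▸ mem_range.mp hj, h⟩⟩)

theorem YoungDiagram.rowLens_toFinsupp_apply (μ : YoungDiagram) (r : ℕ) :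
    μ.rowLens.toFinsupp r = μ.rowLen r := by
  rw [List.toFinsupp_apply]
  by_cases hr : r < μ.colLen 0
  · rw [List.getD_eq_getElem _ _ (by simpa using hr), YoungDiagram.get_rowLens]
  · rw [List.getD_eq_default _ _ (by simpa using hr), eq_comm, ← Nat.le_zero,
      ← not_lt, ← YoungDiagram.mem_iff_lt_rowLen, YoungDiagram.mem_iff_lt_colLen]
    exact hr

theorem YoungDiagram.rowLens_toFinsupp_injective :
    Function.Injective fun μ : YoungDiagram => μ.rowLens.toFinsupp := by
  intro μ ν h
  ext ⟨r, c⟩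
  have := congrArg (· r) h
  simp only [YoungDiagram.rowLens_toFinsupp_apply] at this
  simp only [YoungDiagram.mem_cells, YoungDiagram.mem_iff_lt_rowLen, this]

theorem YoungDiagram.card_cells_eq_sum_rowLens (μ : YoungDiagram) :
    #μ.cells = μ.rowLens.sum := by
  have := μ.card_filter_cells fun _ _ => True
  simp only [filter_true, card_range] at this
  exact this

namespace Finsupp

def valueMultiset {α M : Type*} [Zero M] (d : α →₀ M) : Multiset M := d.support.val.map d

theorem valueMultiset_mapDomain {α β M : Type*} [AddCommMonoid M] {f : α → β}
    (hf : Function.Injective f) (d : α →₀ M) :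
    valueMultiset (mapDomain f d) = valueMultiset d := by
  rw [valueMultiset, valueMultiset, mapDomain_support_of_injective hf,
    image_val_of_injOn hf.injOn, Multiset.map_map]
  exact Multiset.map_congr rfl fun a _ => mapDomain_apply hf d a

theorem degOf_eq_sum_valueMultiset (d : ℕ →₀ ℕ) : degOf d = (valueMultiset d).sum := rfl

theorem eq_toFinsupp_sort_valueMultiset {d : ℕ →₀ ℕ} (hd : Antitone d) :
    d = ((valueMultiset d).sort (· ≥ ·)).toFinsupp := by
  obtain ⟨N, hN⟩ := d.support.exists_nat_subset_range
  have hex : ∃ s, d s = 0 := ⟨N, notMem_support_iff.mp fun h => by simpa using hN h⟩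
  have hsupp : d.support = range (Nat.find hex) := by
    ext r
    rw [mem_support_iff, mem_range]
    refine ⟨fun h => not_le.mp fun hr => h ?_, fun hr => Nat.find_min hex hr⟩
    exact Nat.eq_zero_of_le_zero ((hd hr).trans (Nat.find_spec hex).le)
  set w := (List.range (Nat.find hex)).map d
  have hw : valueMultiset d = w := by
    rw [valueMultiset, hsupp]
    rfl
  have hsorted : w.Pairwise (· ≥ ·) :=
    List.pairwise_map.mpr (List.pairwise_lt_range.imp fun hab => hd hab.le)
  rw [hw, Multiset.coe_sort, List.mergeSort_eq_self _ hsorted]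
  ext r
  rw [List.toFinsupp_apply]
  by_cases hr : r < Nat.find hex
  · rw [List.getD_eq_getElem _ _ (by simpa [w] using hr)]
    simp [w]
  · rw [List.getD_eq_default _ _ (by simpa [w] using hr)]
    exact Nat.eq_zero_of_le_zero ((hd (not_lt.mp hr)).trans (Nat.find_spec hex).le)

def moment (d : ℕ →₀ ℕ) : ℕ := d.sum fun k m => k * m

theorem moment_mapDomain_swap_add (d : ℕ →₀ ℕ) (k : ℕ) :
    moment (mapDomain (Equiv.swap k (k + 1)) d) + d (k + 1) = moment d + d k := by
  set s := d.support ∪ {k, k + 1}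
  have hk : k ∈ s := by simp [s]
  have hk1 : k + 1 ∈ s.erase k := by simp [s]
  have hsum : ∀ f : ℕ → ℕ,
      ∑ a ∈ s, f a = f k + (f (k + 1) + ∑ a ∈ (s.erase k).erase (k + 1), f a) :=
    fun f => by rw [Finset.add_sum_erase _ _ hk1, Finset.add_sum_erase _ _ hk]
  have hrest : ∑ a ∈ (s.erase k).erase (k + 1), Equiv.swap k (k + 1) a * d a =
      ∑ a ∈ (s.erase k).erase (k + 1), a * d a :=
    Finset.sum_congr rfl fun a ha => by
      rw [Equiv.swap_apply_of_ne_of_ne (ne_of_mem_erase (mem_of_mem_erase ha))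
        (ne_of_mem_erase ha)]
  rw [moment, moment, sum_mapDomain_index (fun _ => mul_zero _) (fun _ _ _ => mul_add _ _ _),
    sum_of_support_subset d subset_union_left _ (fun _ _ => mul_zero _),
    sum_of_support_subset d subset_union_left _ (fun _ _ => mul_zero _), hsum, hsum, hrest,
    Equiv.swap_apply_left, Equiv.swap_apply_right]
  ring

theorem exists_antitone_apply_eq {β : Type*} (f : (ℕ →₀ ℕ) → β)
    (hf : ∀ k d, f (mapDomain (Equiv.swap k (k + 1)) d) = f d) (d : ℕ →₀ ℕ) :
    ∃ d₀ : ℕ →₀ ℕ, Antitone d₀ ∧ valueMultiset d₀ = valueMultiset d ∧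
      f d₀ = f d := by
  induction hW : moment d using Nat.strong_induction_on generalizing d with
  | _ W ih =>
    by_cases hd : Antitone d
    · exact ⟨d, hd, rfl, rfl⟩
    -- bubble sort: swapping an ascent `d k < d (k + 1)` lowers the moment
    obtain ⟨k, hk⟩ : ∃ k, d k < d (k + 1) := by
      by_contra! h
      exact hd (antitone_nat_of_succ_le h)
    have := moment_mapDomain_swap_add d k
    obtain ⟨d₀, hd₀, hv, hfd⟩ := ih _ (by omega) (mapDomain (Equiv.swap k (k + 1)) d) rfl
    exact ⟨d₀, hd₀, hv.trans (valueMultiset_mapDomain (Equiv.injective _) d),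
      hfd.trans (hf k d)⟩

theorem apply_mapDomain_eq_of_swap {β : Type*} (f : (ℕ →₀ ℕ) → β)
    (hf : ∀ k d, f (mapDomain (Equiv.swap k (k + 1)) d) = f d) (e : Equiv.Perm ℕ)
    (d : ℕ →₀ ℕ) : f (mapDomain e d) = f d := by
  obtain ⟨d₀, hd₀, hv₀, hf₀⟩ := exists_antitone_apply_eq f hf d
  obtain ⟨d₁, hd₁, hv₁, hf₁⟩ := exists_antitone_apply_eq f hf (mapDomain e d)
  have : d₁ = d₀ := by
    rw [eq_toFinsupp_sort_valueMultiset hd₁, eq_toFinsupp_sort_valueMultiset hd₀, hv₁, hv₀,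
      valueMultiset_mapDomain e.injective]
  rw [← hf₁, this, hf₀]

theorem toLex_lt_of_sum_range_le {d d' : ℕ →₀ ℕ} (hne : d ≠ d')
    (h : ∀ k, ∑ j ∈ range k, d j ≤ ∑ j ∈ range k, d' j) : toLex d < toLex d' := by
  have hex : ∃ j, d j ≠ d' j := DFunLike.ne_iff.mp hne
  have hmin : ∀ x < Nat.find hex, d x = d' x := fun x hx => not_not.mp (Nat.find_min hex hx)
  have hle := h (Nat.find hex + 1)
  rw [sum_range_succ, sum_range_succ, Finset.sum_congr rfl fun x hx => hmin x (mem_range.mp hx),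
    add_le_add_iff_left] at hle
  exact Finsupp.lex_def.mpr ⟨Nat.find hex, hmin, lt_of_le_of_ne hle (Nat.find_spec hex)⟩

end Finsupp

namespace SemistandardYoungTableau

variable {μ : YoungDiagram}

def weight (T : SemistandardYoungTableau μ) (j : ℕ) : ℕ := #{c ∈ μ.cells | T c.1 c.2 = j}

theorem mem_of_entry_ne_zero {T : SemistandardYoungTableau μ} {r c : ℕ} (h : T r c ≠ 0) :
    (r, c) ∈ μ :=
  not_imp_comm.mp T.zeros h

theorem le_entry (T : SemistandardYoungTableau μ) {r c : ℕ} (h : (r, c) ∈ μ) :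
    r ≤ T r c := by
  induction r with
  | zero => exact Nat.zero_le _
  | succ r ih =>
    have := T.col_strict (Nat.lt_add_one r) h
    have := ih (μ.up_left_mem (Nat.le_add_right r 1) le_rfl h)
    omega

theorem degOf_eq_card_cells (T : SemistandardYoungTableau μ) {α : ℕ →₀ ℕ}
    (hT : ∀ j, T.weight j = α j) : degOf α = #μ.cells := by
  have hmem : ∀ p ∈ μ.cells, T p.1 p.2 ∈ α.support := fun p hp => by
    rw [Finsupp.mem_support_iff, ← hT, weight, ← Nat.pos_iff_ne_zero, card_pos]
    exact ⟨p, mem_filter.mpr ⟨hp, rfl⟩⟩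
  rw [degOf, Finsupp.sum, card_eq_sum_card_fiberwise hmem]
  exact sum_congr rfl fun j _ => (hT j).symm

theorem sum_range_weight_le (T : SemistandardYoungTableau μ) (k : ℕ) :
    ∑ j ∈ range k, T.weight j ≤ ∑ j ∈ range k, μ.rowLen j := by
  simp only [weight, YoungDiagram.rowLen_eq_card, YoungDiagram.row]
  rw [← card_filter_lt_eq_sum μ.cells (fun p => T p.1 p.2),
    ← card_filter_lt_eq_sum μ.cells Prod.fst]
  refine card_le_card fun p hp => ?_
  rw [mem_filter] at hp ⊢
  exact ⟨hp.1, (T.le_entry hp.1).trans_lt hp.2⟩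

theorem weight_highestWeight (j : ℕ) : (highestWeight μ).weight j = μ.rowLen j := by
  rw [weight, YoungDiagram.rowLen_eq_card, YoungDiagram.row]
  refine congrArg card (filter_congr fun p hp => ?_)
  rw [highestWeight_apply, if_pos (show (p.1, p.2) ∈ μ from hp)]

theorem eq_highestWeight {T : SemistandardYoungTableau μ} (hT : ∀ j, T.weight j = μ.rowLen j) :
    T = highestWeight μ := by
  suffices h : ∀ r c, (r, c) ∈ μ → T r c = r by
    ext r c
    rw [highestWeight_apply]
    split_ifs with hm
    · exact h r c hm
    · exact T.zeros hm
  intro r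
  induction r using Nat.strong_induction_on with
  | _ r ih =>
    have hsub : {p ∈ μ.cells | T p.1 p.2 = r} ⊆ μ.row r := fun p hp => by
      rw [mem_filter, YoungDiagram.mem_cells] at hp
      have := T.le_entry hp.1
      refine YoungDiagram.mem_row_iff.mpr
        ⟨hp.1, le_antisymm (by omega) (not_lt.mp fun hlt => ?_)⟩
      have := ih p.1 hlt p.2 hp.1
      omega
    have heq := eq_of_subset_of_card_le hsub
      (by rw [← YoungDiagram.rowLen_eq_card, ← hT r]; rfl)
    intro c hm
    exact (mem_filter.mp (heq ▸ YoungDiagram.mem_row_iff.mpr ⟨hm, rfl⟩ :)).2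

end SemistandardYoungTableau

namespace BenderKnuth

open SemistandardYoungTableau

variable {μ : YoungDiagram} (T : SemistandardYoungTableau μ) (i : ℕ)

def IsFree (r c : ℕ) : Prop :=
  (r, c) ∈ μ ∧
    (T r c = i ∧ T (r + 1) c ≠ i + 1 ∨ T r c = i + 1 ∧ (r = 0 ∨ T (r - 1) c ≠ i))

noncomputable def freeCols (r : ℕ) : Finset ℕ := {c ∈ range (μ.rowLen r) | IsFree T i r c}

noncomputable def freeLow (r : ℕ) : Finset ℕ := {c ∈ freeCols T i r | T r c = i}

noncomputable def freeHigh (r : ℕ) : Finset ℕ := {c ∈ freeCols T i r | T r c = i + 1}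

noncomputable def freeStart (r : ℕ) : ℕ :=
  if h : (freeCols T i r).Nonempty then (freeCols T i r).min' h else 0

variable {T i} {r c : ℕ}

theorem mem_freeCols : c ∈ freeCols T i r ↔ IsFree T i r c := by
  simp only [freeCols, mem_filter, mem_range, and_iff_right_iff_imp]
  exact fun h => YoungDiagram.mem_iff_lt_rowLen.mp h.1

theorem IsFree.entry_eq_or (h : IsFree T i r c) : T r c = i ∨ T r c = i + 1 :=
  h.2.imp And.left And.left

theorem not_isFree_of_entry_succ (h₁ : T r c = i) (h₂ : T (r + 1) c = i + 1) :
    ¬IsFree T i r c := by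
  rintro ⟨-, ⟨-, h⟩ | ⟨h, -⟩⟩
  · exact h h₂
  · omega

theorem not_isFree_of_entry_pred (h₁ : T r c = i + 1) (hr : r ≠ 0) (h₂ : T (r - 1) c = i) :
    ¬IsFree T i r c := by
  rintro ⟨-, ⟨h, -⟩ | ⟨-, h | h⟩⟩
  · omega
  · exact hr h
  · exact h h₂

theorem entry_succ_eq_of_not_isFree (hm : (r, c) ∈ μ) (hv : T r c = i) (h : ¬IsFree T i r c) :
    T (r + 1) c = i + 1 := by
  by_contra hb
  exact h ⟨hm, Or.inl ⟨hv, hb⟩⟩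

theorem entry_pred_eq_of_not_isFree (hm : (r, c) ∈ μ) (hv : T r c = i + 1)
    (h : ¬IsFree T i r c) : r ≠ 0 ∧ T (r - 1) c = i := by
  by_contra hp
  exact h ⟨hm, Or.inr ⟨hv, by tauto⟩⟩

theorem IsFree.entry_succ_ne (h : IsFree T i r c) : T (r + 1) c ≠ i + 1 := by
  rcases h with ⟨-, ⟨-, hb⟩ | ⟨hv, -⟩⟩
  · exact hb
  · by_cases hm : (r + 1, c) ∈ μ
    · have := T.col_strict (Nat.lt_add_one r) hm
      omega
    · rw [T.zeros hm]
      omega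

theorem IsFree.entry_pred_ne (h : IsFree T i r c) (hr : r ≠ 0) : T (r - 1) c ≠ i := by
  rcases h with ⟨hm, ⟨hv, -⟩ | ⟨-, h | h⟩⟩
  · have := T.col_strict (Nat.sub_lt (Nat.pos_of_ne_zero hr) one_pos) hm
    omega
  · exact absurd h hr
  · exact h

theorem IsFree.not_isFree_succ (h : IsFree T i r c) : ¬IsFree T i (r + 1) c := by
  intro h'
  have := T.col_strict (Nat.lt_add_one r) h'.1
  have := h.entry_succ_ne
  rcases h.entry_eq_or with _ | _ <;> rcases h'.entry_eq_or with _ | _ <;> omega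

theorem IsFree.not_isFree_pred (h : IsFree T i r c) (hr : r ≠ 0) : ¬IsFree T i (r - 1) c := by
  intro h'
  have := T.col_strict (Nat.sub_lt (Nat.pos_of_ne_zero hr) one_pos) h.1
  have := h.entry_pred_ne hr
  rcases h.entry_eq_or with _ | _ <;> rcases h'.entry_eq_or with _ | _ <;> omega

theorem entry_le_of_isFree_of_lt {c' : ℕ} (hf : IsFree T i r c) (hc' : c' < c)
    (hnf : ¬IsFree T i r c') : T r c' ≤ i := by
  have hm' : (r, c') ∈ μ := μ.up_left_mem le_rfl hc'.le hf.1
  by_contra! h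
  have hval : T r c' = i + 1 ∧ T r c = i + 1 := by
    have := T.row_weak hc' hf.1
    rcases hf.entry_eq_or with _ | _ <;> omega
  have hpaired := entry_pred_eq_of_not_isFree hm' hval.1 hnf
  have hm₁ : (r - 1, c) ∈ μ := μ.up_left_mem (Nat.sub_le r 1) le_rfl hf.1
  have := T.row_weak hc' hm₁
  have := T.col_strict (Nat.sub_lt (Nat.pos_of_ne_zero hpaired.1) one_pos) hf.1
  exact hf.entry_pred_ne hpaired.1 (by omega)

theorem lt_entry_of_isFree_of_lt {c' : ℕ} (hf : IsFree T i r c) (hc' : c < c')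
    (hm' : (r, c') ∈ μ) (hnf : ¬IsFree T i r c') : i < T r c' := by
  by_contra! h
  have hval : T r c' = i ∧ T r c = i := by
    have := T.row_weak hc' hm'
    rcases hf.entry_eq_or with _ | _ <;> omega
  have hbelow := entry_succ_eq_of_not_isFree hm' hval.1 hnf
  have hm₁ : (r + 1, c') ∈ μ := mem_of_entry_ne_zero (show T (r + 1) c' ≠ 0 by omega)
  have := T.row_weak hc' hm₁
  have := T.col_strict (Nat.lt_add_one r) (μ.up_left_mem le_rfl hc'.le hm₁)
  exact hf.entry_succ_ne (by omega)

theorem ordConnected_freeCols : (freeCols T i r : Set ℕ).OrdConnected := by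
  refine ⟨fun c₁ h₁ c₂ h₂ c hc => ?_⟩
  simp only [Finset.mem_coe, mem_freeCols, Set.mem_Icc] at h₁ h₂ hc ⊢
  rcases hc.1.eq_or_lt with rfl | hc₁
  · exact h₁
  rcases hc.2.eq_or_lt with rfl | hc₂
  · exact h₂
  by_contra hnf
  have := lt_entry_of_isFree_of_lt h₁ hc₁ (μ.up_left_mem le_rfl hc₂.le h₂.1) hnf
  have := entry_le_of_isFree_of_lt h₂ hc₂ hnf
  omega

theorem freeLow_union_freeHigh : freeLow T i r ∪ freeHigh T i r = freeCols T i r := by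
  rw [freeLow, freeHigh, ← filter_or]
  exact filter_true_of_mem fun c hc => (mem_freeCols.mp hc).entry_eq_or

theorem disjoint_freeLow_freeHigh : Disjoint (freeLow T i r) (freeHigh T i r) :=
  disjoint_filter.mpr fun _ _ h₁ h₂ => by omega

theorem card_freeCols : #(freeCols T i r) = #(freeLow T i r) + #(freeHigh T i r) := by
  rw [← card_union_of_disjoint disjoint_freeLow_freeHigh, freeLow_union_freeHigh]

theorem lt_of_mem_freeLow_of_mem_freeHigh {c₁ c₂ : ℕ} (h₁ : c₁ ∈ freeLow T i r)
    (h₂ : c₂ ∈ freeHigh T i r) : c₁ < c₂ := by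
  simp only [freeLow, freeHigh, mem_filter, mem_freeCols] at h₁ h₂
  by_contra! h
  have := T.row_weak_of_le h h₁.1.1
  omega

theorem freeCols_eq_Ico : freeCols T i r =
    Ico (freeStart T i r) (freeStart T i r + #(freeLow T i r) + #(freeHigh T i r)) := by
  rw [add_assoc, ← card_freeCols]
  by_cases h : (freeCols T i r).Nonempty
  · rw [freeStart, dif_pos h]
    exact eq_Ico_min'_of_ordConnected h ordConnected_freeCols
  · rw [not_nonempty_iff_eq_empty.mp h]
    simp

theorem freeLow_eq_Ico :
    freeLow T i r = Ico (freeStart T i r) (freeStart T i r + #(freeLow T i r)) := by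
  refine eq_of_subset_of_card_le (fun c hc => ?_) (by simp)
  have hc' := freeCols_eq_Ico ▸ (mem_filter.mp hc).1
  have hsub : freeHigh T i r ⊆
      Ioo c (freeStart T i r + #(freeLow T i r) + #(freeHigh T i r)) := fun x hx =>
    mem_Ioo.mpr ⟨lt_of_mem_freeLow_of_mem_freeHigh hc hx,
      (mem_Ico.mp (freeCols_eq_Ico ▸ (mem_filter.mp hx).1)).2⟩
  have := card_le_card hsub
  rw [Nat.card_Ioo] at this
  rw [mem_Ico] at hc' ⊢
  omega

theorem freeHigh_eq_Ico : freeHigh T i r = Ico (freeStart T i r + #(freeLow T i r))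
    (freeStart T i r + #(freeLow T i r) + #(freeHigh T i r)) := by
  have hsplit : freeHigh T i r = freeCols T i r \ freeLow T i r := by
    rw [← freeLow_union_freeHigh, union_sdiff_cancel_left disjoint_freeLow_freeHigh]
  ext c
  have hF := Finset.ext_iff.mp (freeCols_eq_Ico (T := T) (i := i) (r := r)) c
  have hA := Finset.ext_iff.mp (freeLow_eq_Ico (T := T) (i := i) (r := r)) c
  rw [mem_Ico] at hF hA
  conv_lhs => rw [hsplit, mem_sdiff, hF, hA]
  rw [mem_Ico]
  omega

variable (T i) in
/-- In each row the free cells form an interval holding `a` entries `i` followed by `b` entries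
`i + 1`; they are refilled with `b` entries `i` followed by `a` entries `i + 1`. -/
noncomputable def newEntry (r c : ℕ) : ℕ :=
  if c ∈ freeCols T i r then if c < freeStart T i r + #(freeHigh T i r) then i else i + 1
  else T r c

theorem newEntry_of_notMem (h : c ∉ freeCols T i r) : newEntry T i r c = T r c := if_neg h

theorem newEntry_of_ne (h₁ : T r c ≠ i) (h₂ : T r c ≠ i + 1) : newEntry T i r c = T r c :=
  newEntry_of_notMem fun h => by rcases (mem_freeCols.mp h).entry_eq_or with h | h <;> contradiction

theorem newEntry_eq_iff (h : c ∈ freeCols T i r) :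
    newEntry T i r c = i ↔ c < freeStart T i r + #(freeHigh T i r) := by
  rw [newEntry, if_pos h]
  split_ifs <;> omega

theorem newEntry_mem_Icc (h : c ∈ freeCols T i r) :
    i ≤ newEntry T i r c ∧ newEntry T i r c ≤ i + 1 := by
  rw [newEntry, if_pos h]
  split_ifs <;> omega

theorem newEntry_lt_newEntry_succ (hm : (r + 1, c) ∈ μ) :
    newEntry T i r c < newEntry T i (r + 1) c := by
  have hlt : T r c < T (r + 1) c := T.col_strict (Nat.lt_add_one r) hm
  by_cases hpaired : T r c = i ∧ T (r + 1) c = i + 1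
  · rw [newEntry_of_notMem fun h =>
        not_isFree_of_entry_succ hpaired.1 hpaired.2 (mem_freeCols.mp h),
      newEntry_of_notMem fun h => not_isFree_of_entry_pred hpaired.2 r.succ_ne_zero
        (by simpa using hpaired.1) (mem_freeCols.mp h)]
    exact hlt
  by_cases hbelow : i ≤ T (r + 1) c ∧ T (r + 1) c ≤ i + 1
  · have hr : newEntry T i r c = T r c := newEntry_of_ne (by omega) (by omega)
    have : i ≤ newEntry T i (r + 1) c := by
      by_cases h : c ∈ freeCols T i (r + 1)
      · exact (newEntry_mem_Icc h).1
      · rw [newEntry_of_notMem h]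
        exact hbelow.1
    omega
  · rw [newEntry_of_ne (T := T) (r := r + 1) (by omega) (by omega)]
    by_cases h : c ∈ freeCols T i r
    · have := (newEntry_mem_Icc h).2
      have := (mem_freeCols.mp h).entry_eq_or
      omega
    · rw [newEntry_of_notMem h]
      exact hlt

end BenderKnuth

open BenderKnuth in
noncomputable def SemistandardYoungTableau.benderKnuth {μ : YoungDiagram}
    (T : SemistandardYoungTableau μ) (i : ℕ) : SemistandardYoungTableau μ where
  entry := newEntry T i
  row_weak' {r c₁ c₂} hc hm := by
    by_cases h₁ : c₁ ∈ freeCols T i r <;> by_cases h₂ : c₂ ∈ freeCols T i r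
    · rw [newEntry, if_pos h₁, newEntry, if_pos h₂]
      split_ifs <;> omega
    · have := lt_entry_of_isFree_of_lt (mem_freeCols.mp h₁) hc hm (mt mem_freeCols.mpr h₂)
      have := (newEntry_mem_Icc h₁).2
      rw [newEntry_of_notMem h₂]
      omega
    · have := entry_le_of_isFree_of_lt (mem_freeCols.mp h₂) hc (mt mem_freeCols.mpr h₁)
      have := (newEntry_mem_Icc h₂).1
      rw [newEntry_of_notMem h₁]
      omega
    · rw [newEntry_of_notMem h₁, newEntry_of_notMem h₂]
      exact T.row_weak hc hm
  col_strict' {r₁ r₂ c} hr hm := by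
    induction r₂, hr using Nat.le_induction with
    | base => exact newEntry_lt_newEntry_succ hm
    | succ r₂ hr ih =>
      exact (ih (μ.up_left_mem (Nat.le_add_right r₂ 1) le_rfl hm)).trans
        (newEntry_lt_newEntry_succ hm)
  zeros' hm := by
    rw [newEntry_of_notMem fun h => hm (mem_freeCols.mp h).1]
    exact T.zeros hm

namespace BenderKnuth

open SemistandardYoungTableau

variable {μ : YoungDiagram} {T : SemistandardYoungTableau μ} {i r c : ℕ}

theorem benderKnuth_apply : T.benderKnuth i r c = newEntry T i r c := rfl

theorem IsFree.benderKnuth (h : IsFree T i r c) : IsFree (T.benderKnuth i) i r c := by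
  have hc := mem_freeCols.mpr h
  refine ⟨h.1, ?_⟩
  rw [benderKnuth_apply, benderKnuth_apply, benderKnuth_apply]
  obtain hv | hv : newEntry T i r c = i ∨ newEntry T i r c = i + 1 := by
    have := newEntry_mem_Icc hc
    omega
  · left
    rw [newEntry_of_notMem (mt mem_freeCols.mp h.not_isFree_succ)]
    exact ⟨hv, h.entry_succ_ne⟩
  · right
    refine ⟨hv, or_iff_not_imp_left.mpr fun hr => ?_⟩
    rw [newEntry_of_notMem (mt mem_freeCols.mp (h.not_isFree_pred hr))]
    exact h.entry_pred_ne hr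

theorem not_isFree_benderKnuth (hm : (r, c) ∈ μ) (h : ¬IsFree T i r c) :
    ¬IsFree (T.benderKnuth i) i r c := by
  have hval : T.benderKnuth i r c = T r c := newEntry_of_notMem (mt mem_freeCols.mp h)
  by_cases hv₁ : T r c = i
  · have hb := entry_succ_eq_of_not_isFree hm hv₁ h
    have hb' : T.benderKnuth i (r + 1) c = i + 1 := by
      rw [benderKnuth_apply, newEntry_of_notMem fun h' => not_isFree_of_entry_pred hb
        r.succ_ne_zero (by simpa using hv₁) (mem_freeCols.mp h')]
      exact hb
    exact not_isFree_of_entry_succ (hval.trans hv₁) hb'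
  by_cases hv₂ : T r c = i + 1
  · obtain ⟨hr, ha⟩ := entry_pred_eq_of_not_isFree hm hv₂ h
    have ha' : T.benderKnuth i (r - 1) c = i := by
      rw [benderKnuth_apply, newEntry_of_notMem fun h' => not_isFree_of_entry_succ ha
        (by rwa [Nat.sub_add_cancel (Nat.pos_of_ne_zero hr)]) (mem_freeCols.mp h')]
      exact ha
    exact not_isFree_of_entry_pred (hval.trans hv₂) hr ha'
  · intro hf
    rcases hf.entry_eq_or with h' | h' <;> rw [hval] at h' <;> contradiction

theorem isFree_benderKnuth_iff : IsFree (T.benderKnuth i) i r c ↔ IsFree T i r c :=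
  ⟨fun h => by_contra fun h' => not_isFree_benderKnuth h.1 h' h, IsFree.benderKnuth⟩

theorem freeCols_benderKnuth : freeCols (T.benderKnuth i) i r = freeCols T i r := by
  ext c
  simp only [mem_freeCols, isFree_benderKnuth_iff]

theorem freeStart_benderKnuth : freeStart (T.benderKnuth i) i r = freeStart T i r := by
  simp only [freeStart, freeCols_benderKnuth]

theorem freeLow_benderKnuth : freeLow (T.benderKnuth i) i r =
    Ico (freeStart T i r) (freeStart T i r + #(freeHigh T i r)) := by
  ext c
  have hF := Finset.ext_iff.mp (freeCols_eq_Ico (T := T) (i := i) (r := r)) c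
  rw [mem_Ico] at hF
  rw [freeLow, mem_filter, freeCols_benderKnuth, benderKnuth_apply, mem_Ico]
  constructor
  · rintro ⟨hc, hv⟩
    exact ⟨(hF.mp hc).1, (newEntry_eq_iff hc).mp hv⟩
  · rintro hc
    have hc' : c ∈ freeCols T i r := hF.mpr (by omega)
    exact ⟨hc', (newEntry_eq_iff hc').mpr hc.2⟩

theorem card_freeLow_benderKnuth : #(freeLow (T.benderKnuth i) i r) = #(freeHigh T i r) := by
  rw [freeLow_benderKnuth, Nat.card_Ico]
  omega

theorem card_freeHigh_benderKnuth : #(freeHigh (T.benderKnuth i) i r) = #(freeLow T i r) := by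
  have := card_freeCols (T := T.benderKnuth i) (i := i) (r := r)
  rw [freeCols_benderKnuth, card_freeCols, card_freeLow_benderKnuth] at this
  omega

theorem benderKnuth_benderKnuth : (T.benderKnuth i).benderKnuth i = T := by
  ext r c
  change newEntry (T.benderKnuth i) i r c = T r c
  by_cases hc : c ∈ freeCols T i r
  · rw [newEntry, if_pos (by rwa [freeCols_benderKnuth]), freeStart_benderKnuth,
      card_freeHigh_benderKnuth]
    rcases mem_union.mp (freeLow_union_freeHigh ▸ hc) with hA | hB
    · rw [if_pos (mem_Ico.mp (freeLow_eq_Ico ▸ hA)).2]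
      exact (mem_filter.mp hA).2.symm
    · rw [if_neg (not_lt.mpr (mem_Ico.mp (freeHigh_eq_Ico ▸ hB)).1)]
      exact (mem_filter.mp hB).2.symm
  · rw [newEntry_of_notMem (by rwa [freeCols_benderKnuth]), benderKnuth_apply,
      newEntry_of_notMem hc]

theorem weight_eq_card_not_isFree_add (S : SemistandardYoungTableau μ) (i v : ℕ) :
    S.weight v = #{p ∈ μ.cells | S p.1 p.2 = v ∧ ¬IsFree S i p.1 p.2} +
      ∑ r ∈ range (μ.colLen 0), #{c ∈ freeCols S i r | S r c = v} := by
  rw [SemistandardYoungTableau.weight,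
    ← card_filter_add_card_filter_not (fun p => IsFree S i p.1 p.2),
    filter_filter, filter_filter, add_comm,
    μ.card_filter_cells fun r c => S r c = v ∧ IsFree S i r c]
  congr 1
  refine sum_congr rfl fun r _ => ?_
  rw [freeCols, filter_filter]
  simp only [and_comm]

theorem filter_not_isFree_benderKnuth (v : ℕ) :
    {p ∈ μ.cells | T.benderKnuth i p.1 p.2 = v ∧ ¬IsFree (T.benderKnuth i) i p.1 p.2} =
      {p ∈ μ.cells | T p.1 p.2 = v ∧ ¬IsFree T i p.1 p.2} := by
  refine filter_congr fun p _ => ?_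
  rw [isFree_benderKnuth_iff, and_congr_left_iff]
  intro hf
  rw [benderKnuth_apply, newEntry_of_notMem (mt mem_freeCols.mp hf)]

/-- Non-free cells come in vertical dominoes, `i` directly above `i + 1`. -/
theorem card_filter_not_isFree_eq :
    #{p ∈ μ.cells | T p.1 p.2 = i ∧ ¬IsFree T i p.1 p.2} =
      #{p ∈ μ.cells | T p.1 p.2 = i + 1 ∧ ¬IsFree T i p.1 p.2} := by
  refine card_nbij' (fun p => (p.1 + 1, p.2)) (fun p => (p.1 - 1, p.2)) ?_ ?_ ?_ ?_
  · rintro ⟨r, c⟩ hp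
    simp only [coe_filter, Set.mem_ofPred_eq, YoungDiagram.mem_cells] at hp ⊢
    have hb := entry_succ_eq_of_not_isFree hp.1 hp.2.1 hp.2.2
    exact ⟨mem_of_entry_ne_zero (show T (r + 1) c ≠ 0 by omega), hb,
      not_isFree_of_entry_pred hb r.succ_ne_zero (by simpa using hp.2.1)⟩
  · rintro ⟨r, c⟩ hp
    simp only [coe_filter, Set.mem_ofPred_eq, YoungDiagram.mem_cells] at hp ⊢
    obtain ⟨hr, ha⟩ := entry_pred_eq_of_not_isFree hp.1 hp.2.1 hp.2.2
    exact ⟨μ.up_left_mem (Nat.sub_le r 1) le_rfl hp.1, ha, not_isFree_of_entry_succ ha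
      (by rw [Nat.sub_add_cancel (Nat.pos_of_ne_zero hr)]; exact hp.2.1)⟩
  · rintro ⟨r, c⟩ -
    simp
  · rintro ⟨r, c⟩ hp
    simp only [coe_filter, Set.mem_ofPred_eq, YoungDiagram.mem_cells] at hp
    obtain ⟨hr, -⟩ := entry_pred_eq_of_not_isFree hp.1 hp.2.1 hp.2.2
    simp only [Prod.mk.injEq, and_true]
    omega

theorem weight_benderKnuth_self : (T.benderKnuth i).weight i = T.weight (i + 1) := by
  rw [weight_eq_card_not_isFree_add _ i, weight_eq_card_not_isFree_add _ i,
    filter_not_isFree_benderKnuth, card_filter_not_isFree_eq]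
  congr 1
  exact sum_congr rfl fun r _ => card_freeLow_benderKnuth

theorem weight_benderKnuth_succ : (T.benderKnuth i).weight (i + 1) = T.weight i := by
  simpa only [benderKnuth_benderKnuth] using
    (weight_benderKnuth_self (T := T.benderKnuth i) (i := i)).symm

theorem weight_benderKnuth_of_ne {j : ℕ} (h₁ : j ≠ i) (h₂ : j ≠ i + 1) :
    (T.benderKnuth i).weight j = T.weight j := by
  refine congrArg card (filter_congr fun p _ => ?_)
  by_cases hc : p.2 ∈ freeCols T i p.1
  · have := newEntry_mem_Icc hc
    have := (mem_freeCols.mp hc).entry_eq_or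
    rw [benderKnuth_apply]
    omega
  · rw [benderKnuth_apply, newEntry_of_notMem hc]

end BenderKnuth

open BenderKnuth in
theorem SemistandardYoungTableau.weight_benderKnuth {μ : YoungDiagram}
    (T : SemistandardYoungTableau μ) (i j : ℕ) :
    (T.benderKnuth i).weight j = T.weight (Equiv.swap i (i + 1) j) := by
  rcases eq_or_ne j i with rfl | h₁
  · rw [Equiv.swap_apply_left, weight_benderKnuth_self]
  rcases eq_or_ne j (i + 1) with rfl | h₂
  · rw [Equiv.swap_apply_right, weight_benderKnuth_succ]
  · rw [Equiv.swap_apply_of_ne_of_ne h₁ h₂, weight_benderKnuth_of_ne h₁ h₂]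

theorem rowLens_toYD {n : ℕ} (l : n.Partition) : (toYD l).rowLens = l.parts.sort (· ≥ ·) :=
  YoungDiagram.rowLens_ofRowLens_eq_self fun _ hx => l.parts_pos ((Multiset.mem_sort _).mp hx)

theorem card_cells_toYD {n : ℕ} (l : n.Partition) : #(toYD l).cells = n := by
  rw [YoungDiagram.card_cells_eq_sum_rowLens, rowLens_toYD, ← Multiset.sum_coe, Multiset.sort_eq,
    l.parts_sum]

theorem toYD_injective (n : ℕ) : Function.Injective (toYD (n := n)) := fun l m h =>
  Nat.Partition.ext <| by
    simpa only [rowLens_toYD, Multiset.sort_eq] using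
      congrArg (fun μ : YoungDiagram => (μ.rowLens : Multiset ℕ)) h

theorem exists_rowLens_toYD_eq {d : ℕ →₀ ℕ} (hd : Antitone d) {n : ℕ} (hn : degOf d = n) :
    ∃ l : n.Partition, (toYD l).rowLens.toFinsupp = d := by
  refine ⟨⟨Finsupp.valueMultiset d, fun hx => ?_,
    by rw [← hn, Finsupp.degOf_eq_sum_valueMultiset]⟩, ?_⟩
  · obtain ⟨a, ha, rfl⟩ := Multiset.mem_map.mp hx
    exact Nat.pos_of_ne_zero (Finsupp.mem_support_iff.mp ha)
  · rw [rowLens_toYD]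
    exact (Finsupp.eq_toFinsupp_sort_valueMultiset hd).symm

section Schur

open SemistandardYoungTableau

theorem coeff_schurFn (μ : YoungDiagram) (α : ℕ →₀ ℕ) :
    coeff α (schurFn μ) =
      Nat.card {T : SemistandardYoungTableau μ // ∀ j, T.weight j = α j} :=
  rfl

theorem exists_weight_eq_of_coeff_schurFn_ne_zero {μ : YoungDiagram} {α : ℕ →₀ ℕ}
    (h : coeff α (schurFn μ) ≠ 0) :
    ∃ T : SemistandardYoungTableau μ, ∀ j, T.weight j = α j := by
  rw [coeff_schurFn, Nat.cast_ne_zero, Nat.card_ne_zero] at h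
  obtain ⟨⟨T, hT⟩⟩ := h.1
  exact ⟨T, hT⟩

theorem coeff_mapDomain_swap_schurFn (μ : YoungDiagram) (i : ℕ) (α : ℕ →₀ ℕ) :
    coeff (Finsupp.mapDomain (Equiv.swap i (i + 1)) α) (schurFn μ) = coeff α (schurFn μ) := by
  rw [coeff_schurFn, coeff_schurFn, Nat.card_congr]
  refine (Function.Involutive.toPerm (fun T : SemistandardYoungTableau μ => T.benderKnuth i)
    fun _ => BenderKnuth.benderKnuth_benderKnuth).subtypeEquiv fun T => ?_
  change (∀ j, T.weight j = _) ↔ ∀ j, (T.benderKnuth i).weight j = α j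
  simp only [weight_benderKnuth, Finsupp.mapDomain_equiv_apply, Equiv.symm_swap]
  exact ⟨fun h j => by simpa using h (Equiv.swap i (i + 1) j),
    fun h j => by simpa using h (Equiv.swap i (i + 1) j)⟩

theorem schurFn_mem_LambdaDeg (μ : YoungDiagram) : schurFn μ ∈ LambdaDeg #μ.cells :=
  ⟨Finsupp.apply_mapDomain_eq_of_swap (fun d => coeff d (schurFn μ))
    (coeff_mapDomain_swap_schurFn μ), fun _ hd =>
    let ⟨T, hT⟩ := exists_weight_eq_of_coeff_schurFn_ne_zero hd
    T.degOf_eq_card_cells hT⟩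

theorem coeff_rowLens_schurFn (μ : YoungDiagram) :
    coeff μ.rowLens.toFinsupp (schurFn μ) = 1 := by
  rw [coeff_schurFn, Nat.cast_eq_one, Nat.card_eq_one_iff_exists]
  refine ⟨⟨highestWeight μ, fun j => by
    rw [weight_highestWeight, YoungDiagram.rowLens_toFinsupp_apply]⟩, fun ⟨T, hT⟩ => ?_⟩
  exact Subtype.ext (eq_highestWeight fun j => by rw [hT, YoungDiagram.rowLens_toFinsupp_apply])

theorem sum_range_le_of_coeff_schurFn_ne_zero {μ : YoungDiagram} {α : ℕ →₀ ℕ}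
    (h : coeff α (schurFn μ) ≠ 0) (k : ℕ) :
    ∑ j ∈ range k, α j ≤ ∑ j ∈ range k, μ.rowLen j := by
  obtain ⟨T, hT⟩ := exists_weight_eq_of_coeff_schurFn_ne_zero h
  simpa only [hT] using T.sum_range_weight_le k

end Schur

theorem schurFn_toYD_mem_LambdaDeg {n : ℕ} (l : n.Partition) :
    schurFn (toYD l) ∈ LambdaDeg n := by
  simpa only [card_cells_toYD] using schurFn_mem_LambdaDeg (toYD l)

theorem eq_zero_of_mem_LambdaDeg {n : ℕ} {ψ : MvPowerSeries ℕ ℤ} (hψ : ψ ∈ LambdaDeg n)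
    (h : ∀ l : n.Partition, coeff (toYD l).rowLens.toFinsupp ψ = 0) : ψ = 0 := by
  obtain ⟨hsymm, hdeg⟩ := hψ
  ext d
  rw [map_zero]
  by_contra hd
  obtain ⟨d₀, hd₀, hv, hc⟩ :=
    Finsupp.exists_antitone_apply_eq (fun d => coeff d ψ) (fun _ => hsymm _) d
  obtain ⟨l, hl⟩ := exists_rowLens_toYD_eq hd₀ (by
    rw [Finsupp.degOf_eq_sum_valueMultiset, hv, ← Finsupp.degOf_eq_sum_valueMultiset, hdeg d hd])
  exact hd (hc ▸ hl ▸ h l)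

section Kostka

open Matrix

variable {n : ℕ}

noncomputable abbrev partitionLexOrder (n : ℕ) : LinearOrder n.Partition :=
  LinearOrder.lift' (fun l => toLex (toYD l).rowLens.toFinsupp)
    (YoungDiagram.rowLens_toFinsupp_injective.comp (toYD_injective n))

attribute [local instance] partitionLexOrder

noncomputable def kostka (n : ℕ) : Matrix n.Partition n.Partition ℤ :=
  fun l m => coeff (toYD m).rowLens.toFinsupp (schurFn (toYD l))

theorem kostka_isLowerTriangular : (kostka n).IsLowerTriangular := by
  intro l m hlm
  by_contra h
  have hdom := sum_range_le_of_coeff_schurFn_ne_zero h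
  simp only [← YoungDiagram.rowLens_toFinsupp_apply] at hdom
  have hne : (toYD m).rowLens.toFinsupp ≠ (toYD l).rowLens.toFinsupp :=
    (YoungDiagram.rowLens_toFinsupp_injective.comp (toYD_injective n)).ne (ne_of_gt hlm).symm
  exact lt_asymm hlm (Finsupp.toLex_lt_of_sum_range_le hne hdom)

theorem det_kostka : (kostka n).det = 1 := by
  rw [Matrix.det_of_isLowerTriangular _ kostka_isLowerTriangular]
  exact prod_eq_one fun l _ => coeff_rowLens_schurFn (toYD l)

theorem isUnit_kostka : IsUnit (kostka n) :=
  (isUnit_iff_isUnit_det _).mpr (det_kostka ▸ isUnit_one)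

theorem coeff_sum_smul_schurFn (g : n.Partition → ℤ) (m : n.Partition) :
    coeff (toYD m).rowLens.toFinsupp (∑ l, g l • schurFn (toYD l)) = (g ᵥ* kostka n) m := by
  simp only [map_sum, LinearMap.map_smul_of_tower, smul_eq_mul, vecMul, dotProduct, kostka]

theorem linearIndependent_schurFn (n : ℕ) :
    LinearIndependent ℤ fun l : n.Partition => schurFn (toYD l) := by
  rw [Fintype.linearIndependent_iff]
  intro g hg
  have hvec : g ᵥ* kostka n = 0 := funext fun m => by
    rw [← coeff_sum_smul_schurFn, hg, map_zero, Pi.zero_apply]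
  have hg0 : g = 0 := by
    by_contra hne
    exact one_ne_zero (det_kostka ▸ Matrix.exists_vecMul_eq_zero_iff.mp ⟨g, hne, hvec⟩)
  exact congrFun hg0

theorem LambdaDeg_le_span_schurFn (n : ℕ) :
    LambdaDeg n ≤ Submodule.span ℤ (Set.range fun l : n.Partition => schurFn (toYD l)) := by
  intro φ hφ
  obtain ⟨c, hc⟩ : ∃ c, c ᵥ* kostka n = fun m => coeff (toYD m).rowLens.toFinsupp φ :=
    vecMul_surjective_iff_isUnit.mpr isUnit_kostka _
  have hψ := eq_zero_of_mem_LambdaDeg (ψ := φ - ∑ l, c l • schurFn (toYD l))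
    (sub_mem hφ (sum_mem fun l _ => Submodule.smul_mem _ (c l) (schurFn_toYD_mem_LambdaDeg l)))
    fun m => by simp only [map_sub, coeff_sum_smul_schurFn, hc, sub_self]
  rw [sub_eq_zero.mp hψ]
  exact sum_mem fun l _ => Submodule.smul_mem _ _ (Submodule.subset_span ⟨l, rfl⟩)

end Kostka

/-- The Schur functions `s_λ`, as `λ` ranges over partitions of `n`, form a `ℤ`-basis
for the degree-`n` homogeneous component `Λ^n` of the ring of symmetric functions:
they are linearly independent and span `Λ^n`. -/
theorem schur_basis (n : ℕ) :
    LinearIndependent ℤ (fun l : n.Partition => schurFn (toYD l)) ∧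
      Submodule.span ℤ (Set.range fun l : n.Partition => schurFn (toYD l)) = LambdaDeg n := by
  refine ⟨linearIndependent_schurFn n, le_antisymm ?_ (LambdaDeg_le_span_schurFn n)⟩
  exact Submodule.span_le.mpr (Set.range_subset_iff.mpr schurFn_toYD_mem_LambdaDeg)
end

section
/- Relative plethysm is associative: for bisymmetric functions f̄, ḡ, h̄ ∈ Λ_{x,y} and symmetric functions g, h ∈ Λ_y, one has (f̄ ∘̄ (ḡ, g)) ∘̄ (h̄, h) = f̄ ∘̄ (ḡ ∘̄ (h̄, h), g ∘ h). -/
/-!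
We model the ring of bisymmetric functions with rational coefficients
`Λ_{x,y} ⊗ ℚ = (Λ_x ⊗ Λ_y) ⊗ ℚ` as the polynomial ring on the algebraically independent
generators `p_n(x), p_n(y)` (`n ≥ 1`), i.e. as `MvPolynomial (ℕ+ ⊕ ℕ+) ℚ`, where
`X (inl n) = p_n(x)` and `X (inr n) = p_n(y)`; similarly `Λ_y ⊗ ℚ = MvPolynomial ℕ+ ℚ`
with `X n = p_n(y)`.  The relative plethysm `f̄ ∘̄ (ḡ, g)` is the unique operation that
is a ring homomorphism in `f̄` and satisfies
`p_n(y) ∘̄ (ḡ, g) = g(y_1^n, y_2^n, …)` (replace each `p_m(y)` by `p_{nm}(y)`) and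
`p_n(x) ∘̄ (ḡ, g) = ḡ(x_1^n, …; y_1^n, …)` (replace each `p_m(x)`, `p_m(y)` by
`p_{nm}(x)`, `p_{nm}(y)`); `g ∘ h` denotes ordinary plethysm in `Λ_y`.
-/

open MvPolynomial

/-- The ring `Λ_y ⊗ ℚ` of symmetric functions in the `y`-variables, in the power sum
presentation: the variable `X n` is the power sum `p_n(y)`. -/
abbrev SymQ : Type := MvPolynomial ℕ+ ℚ

/-- The ring `Λ_{x,y} ⊗ ℚ` of bisymmetric functions, in the power sum presentation:
`X (Sum.inl n) = p_n(x)` and `X (Sum.inr n) = p_n(y)`. -/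
abbrev BiSymQ : Type := MvPolynomial (ℕ+ ⊕ ℕ+) ℚ

/-- Ordinary plethysm in `Λ_y`, in the power sum presentation. -/
noncomputable def plethysm (f g : SymQ) : SymQ :=
  aeval (fun n : ℕ+ => aeval (fun m : ℕ+ => (X (n * m) : SymQ)) g) f

/-- `g(y_1^n, y_2^n, …)`, viewed in `Λ_{x,y}`: each power sum `p_m(y)` is replaced by
`p_{nm}(y)`. -/
noncomputable def frobY (n : ℕ+) (g : SymQ) : BiSymQ :=
  aeval (fun m : ℕ+ => (X (Sum.inr (n * m)) : BiSymQ)) g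

/-- `ḡ(x_1^n, x_2^n, …; y_1^n, y_2^n, …)`: each power sum `p_m(x)`, resp. `p_m(y)`, is
replaced by `p_{nm}(x)`, resp. `p_{nm}(y)`. -/
noncomputable def frobXY (n : ℕ+) (g : BiSymQ) : BiSymQ :=
  aeval (fun v : ℕ+ ⊕ ℕ+ => (X (Sum.map (fun m => n * m) (fun m => n * m) v) : BiSymQ)) g

/-- The relative plethysm `f̄ ∘̄ (ḡ, g)`: the ring homomorphism in `f̄` determined by
`p_n(x) ↦ ḡ(x^n; y^n)` and `p_n(y) ↦ g(y^n)`. -/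
noncomputable def rplethysm (f : BiSymQ) (g' : BiSymQ) (g : SymQ) : BiSymQ :=
  aeval (Sum.elim (fun n : ℕ+ => frobXY n g') (fun n : ℕ+ => frobY n g)) f

lemma frobXY_frobXY (n m : ℕ+) (f : BiSymQ) : frobXY n (frobXY m f) = frobXY (n * m) f := by
  simp only [frobXY, comp_aeval_apply]
  refine AlgHom.congr_fun (algHom_ext fun v => ?_) f
  cases v <;> simp [mul_assoc]

lemma frobXY_frobY (n m : ℕ+) (g : SymQ) : frobXY n (frobY m g) = frobY (n * m) g := by
  simp only [frobXY, frobY, comp_aeval_apply]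
  refine AlgHom.congr_fun (algHom_ext fun k => ?_) g
  simp [mul_assoc]

lemma rplethysm_frobY (n : ℕ+) (g h : SymQ) (h' : BiSymQ) :
    rplethysm (frobY n g) h' h = frobY n (plethysm g h) := by
  simp only [rplethysm, frobY, plethysm, comp_aeval_apply]
  refine AlgHom.congr_fun (algHom_ext fun m => ?_) g
  simp only [aeval_X, Sum.elim_inr, frobY, comp_aeval_apply]
  refine AlgHom.congr_fun (algHom_ext fun k => ?_) h
  simp [mul_assoc]

lemma rplethysm_frobXY (n : ℕ+) (g' h' : BiSymQ) (h : SymQ) :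
    rplethysm (frobXY n g') h' h = frobXY n (rplethysm g' h' h) := by
  simp only [rplethysm, frobXY, comp_aeval_apply]
  refine AlgHom.congr_fun (algHom_ext fun v => ?_) g'
  cases v with
  | inl m =>
    simp only [aeval_X, Sum.map_inl, Sum.elim_inl, comp_aeval_apply]
    refine AlgHom.congr_fun (algHom_ext fun w => ?_) h'
    cases w <;> simp [mul_assoc]
  | inr m =>
    simp only [aeval_X, Sum.map_inr, Sum.elim_inr, frobY, comp_aeval_apply]
    refine AlgHom.congr_fun (algHom_ext fun k => ?_) h
    simp [mul_assoc]

/-- Relative plethysm is associative: for bisymmetric functions `f̄, ḡ, h̄ ∈ Λ_{x,y}` and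
symmetric functions `g, h ∈ Λ_y`, one has
`(f̄ ∘̄ (ḡ, g)) ∘̄ (h̄, h) = f̄ ∘̄ (ḡ ∘̄ (h̄, h), g ∘ h)`. -/
theorem rplethysm_assoc (f g' h' : BiSymQ) (g h : SymQ) :
    rplethysm (rplethysm f g' g) h' h = rplethysm f (rplethysm g' h' h) (plethysm g h) := by
  simp only [rplethysm, comp_aeval_apply]
  refine AlgHom.congr_fun (algHom_ext fun v => ?_) f
  simp only [aeval_X]
  cases v with
  | inl n => exact rplethysm_frobXY n g' h' h
  | inr n => exact rplethysm_frobY n g h h'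
end
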